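/- arXiv:2003.10143 — 10 statements merged into one kernel-verified Lean document; each statement's English description precedes it below -/
import Mathlib

section
/- The constrained available storage and constrained required supply relative to a ground state x* satisfy S_a(x*) = sup_x (−S_{rc}(x)) and S_r(x*) = inf_x (−S_{ac}(x)), assuming the system is reachable from x* and controllable to x* and trajectories can be concatenated. -/
open Set Filter

/-- An abstract system: a set of trajectories, each recorded as
(initial state, final state, integral of the supply rate along the trajectory). -/
structure Sys (X : Type) where
  Traj : Set (X × X × ℝ)

/-- `S` is a storage function: the dissipation inequality holds along all trajectories. -/
def IsStorage {X : Type} (P : Sys X) (S : X → ℝ) : Prop :=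
  ∀ τ ∈ P.Traj, S τ.2.1 ≤ S τ.1 + τ.2.2

/-- Cyclo-dissipativity: the supply integral is nonnegative along every cyclic trajectory. -/
def CycloDiss {X : Type} (P : Sys X) : Prop :=
  ∀ τ ∈ P.Traj, τ.2.1 = τ.1 → 0 ≤ τ.2.2

/-- Cyclo-dissipativity with respect to the ground state `xs`. -/
def CycloDissAt {X : Type} (P : Sys X) (xs : X) : Prop :=
  ∀ r : ℝ, (xs, xs, r) ∈ P.Traj → 0 ≤ r

/-- Available storage `S_a(x)`: sup of `-∫ s` over trajectories starting at `x`. -/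
noncomputable def Sa {X : Type} (P : Sys X) (x : X) : EReal :=
  sSup {e : EReal | ∃ y r, (x, y, r) ∈ P.Traj ∧ e = ((-r : ℝ) : EReal)}

/-- Required supply `S_r(x)`: inf of `∫ s` over trajectories ending at `x`. -/
noncomputable def Sr {X : Type} (P : Sys X) (x : X) : EReal :=
  sInf {e : EReal | ∃ y r, (y, x, r) ∈ P.Traj ∧ e = ((r : ℝ) : EReal)}

/-- Constrained available storage `S_{ac}(x)` w.r.t. ground state `xs`:
sup of `-∫ s` over trajectories from `x` to `xs`. -/
noncomputable def Sac {X : Type} (P : Sys X) (xs x : X) : EReal :=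
  sSup {e : EReal | ∃ r, (x, xs, r) ∈ P.Traj ∧ e = ((-r : ℝ) : EReal)}

/-- Constrained required supply `S_{rc}(x)` w.r.t. ground state `xs`:
inf of `∫ s` over trajectories from `xs` to `x`. -/
noncomputable def Src {X : Type} (P : Sys X) (xs x : X) : EReal :=
  sInf {e : EReal | ∃ r, (xs, x, r) ∈ P.Traj ∧ e = ((r : ℝ) : EReal)}

/-- Trajectories can be concatenated, supply integrals adding up. -/
def HasConcat {X : Type} (P : Sys X) : Prop :=
  ∀ x y z r₁ r₂, (x, y, r₁) ∈ P.Traj → (y, z, r₂) ∈ P.Traj → (x, z, r₁ + r₂) ∈ P.Traj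

/-- Every state admits the trivial trajectory of duration zero. -/
def HasTrivial {X : Type} (P : Sys X) : Prop := ∀ x, (x, x, (0:ℝ)) ∈ P.Traj

/-- Every state is reachable from `xs`. -/
def ReachableFrom {X : Type} (P : Sys X) (xs : X) : Prop := ∀ x, ∃ r, (xs, x, r) ∈ P.Traj

/-- Every state can be steered to `xs`. -/
def ControllableTo {X : Type} (P : Sys X) (xs : X) : Prop := ∀ x, ∃ r, (x, xs, r) ∈ P.Traj

/-- Sa(x*) = sup_x (−S_rc(x)) and Sr(x*) = inf_x (−S_ac(x)). -/
theorem stmt2 {X : Type} (P : Sys X) (xs : X) (hR : ReachableFrom P xs)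
    (hC : ControllableTo P xs) (hcat : HasConcat P) :
    Sa P xs = ⨆ x : X, -(Src P xs x) ∧ Sr P xs = ⨅ x : X, -(Sac P xs x) := by
  constructor
  · apply le_antisymm
    · apply sSup_le
      rintro e ⟨y, r, hT, rfl⟩
      have h1 : Src P xs y ≤ ((r : ℝ) : EReal) := sInf_le ⟨r, hT, rfl⟩
      have h2 : ((-r : ℝ) : EReal) ≤ -(Src P xs y) := by
        rw [EReal.coe_neg]; exact EReal.neg_le_neg_iff.mpr h1
      exact h2.trans (le_iSup (fun x => -(Src P xs x)) y)
    · apply iSup_le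
      intro x
      rw [EReal.neg_le]
      apply le_sInf
      rintro e ⟨r, hT, rfl⟩
      have : ((-r : ℝ) : EReal) ≤ Sa P xs := le_sSup ⟨x, r, hT, rfl⟩
      rw [EReal.coe_neg] at this
      exact EReal.neg_le.mpr this
  · apply le_antisymm
    · apply le_iInf
      intro x
      rw [← EReal.neg_le_neg_iff, neg_neg]
      apply sSup_le
      rintro e ⟨r, hT, rfl⟩
      have h1 : Sr P xs ≤ ((r : ℝ) : EReal) := sInf_le ⟨x, r, hT, rfl⟩
      rw [EReal.coe_neg]; exact EReal.neg_le_neg_iff.mpr h1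
    · apply le_sInf
      rintro e ⟨y, r, hT, rfl⟩
      have h1 : -((r : ℝ) : EReal) ≤ Sac P xs y := by
        rw [← EReal.coe_neg]; exact le_sSup ⟨r, hT, rfl⟩
      have h2 : -(Sac P xs y) ≤ ((r : ℝ) : EReal) := EReal.neg_le.mpr h1
      exact (iInf_le (fun x => -(Sac P xs x)) y).trans h2
end

section
/- If the system is reachable from x* and controllable to x* (with concatenation of trajectories), then it is cyclo-dissipative with respect to x* if and only if S_{ac}(x) ≤ S_{rc}(x) for all states x. -/
open Set Filter

/-- cyclo-dissipativity w.r.t. x* iff S_ac ≤ S_rc pointwise. -/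
theorem stmt5 {X : Type} (P : Sys X) (xs : X) (hR : ReachableFrom P xs)
    (hC : ControllableTo P xs) (hcat : HasConcat P) :
    CycloDissAt P xs ↔ ∀ x : X, Sac P xs x ≤ Src P xs x := by
  constructor
  · intro hcd x
    apply sSup_le
    rintro e ⟨r1, h1, rfl⟩
    apply le_sInf
    rintro e ⟨r2, h2, rfl⟩
    have := hcd (r2 + r1) (hcat xs x xs r2 r1 h2 h1)
    exact_mod_cast by linarith
  · intro h r hr
    have h1 : ((-r : ℝ) : EReal) ≤ Sac P xs xs := le_sSup ⟨r, hr, rfl⟩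
    have h2 : Src P xs xs ≤ ((r : ℝ) : EReal) := sInf_le ⟨r, hr, rfl⟩
    have : ((-r : ℝ) : EReal) ≤ ((r : ℝ) : EReal) := h1.trans ((h xs).trans h2)
    exact_mod_cast by linarith [EReal.coe_le_coe_iff.mp this]
end

section
/- If the system is cyclo-dissipative with respect to x*, reachable from x*, and controllable to x*, then any storage function S : X → ℝ satisfies S_{ac}(x) ≤ S(x) − S(x*) ≤ S_{rc}(x) for all states x. -/
open Set Filter

/-- every storage function satisfies S_ac(x) ≤ S(x) − S(x*) ≤ S_rc(x). -/
theorem stmt7 {X : Type} (P : Sys X) (xs : X) (hcd : CycloDissAt P xs)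
    (hR : ReachableFrom P xs) (hC : ControllableTo P xs)
    (S : X → ℝ) (hS : IsStorage P S) :
    ∀ x : X, Sac P xs x ≤ ((S x - S xs : ℝ) : EReal) ∧
      ((S x - S xs : ℝ) : EReal) ≤ Src P xs x := by
  intro x
  constructor
  · apply sSup_le
    rintro e ⟨r, hmem, rfl⟩
    have := hS _ hmem
    simp only at this
    exact_mod_cast by linarith
  · apply le_sInf
    rintro e ⟨r, hmem, rfl⟩
    have := hS _ hmem
    simp only at this
    exact_mod_cast by linarith
end

section
/- If the system is cyclo-dissipative with respect to x*, reachable from x* and controllable to x* with concatenation, then both S_{ac} and S_{rc} are (real-valued) storage functions, i.e., each satisfies the dissipation inequality along all trajectories; consequently the system is cyclo-dissipative (along all cycles, not only those through x*). -/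
open Set Filter

/-!
Along a trajectory from `x` to `y` with supply `r`, appending any trajectory from `y` to `xs`
gives one from `x` to `xs`, so `S_ac(y) ≤ S_ac(x) + r`; prefixing trajectories from `xs` to `x`
gives `S_rc(y) ≤ S_rc(x) + r` in the same way. Both functions are finite because a trajectory
`x → xs` of supply `a` and one `xs → x` of supply `b` close up into a cycle through `xs`, so
`-a ≤ b` bounds `S_ac(x)` above by `b` and `S_rc(x)` below by `-a`.
-/

section Storage

variable {X : Type} {P : Sys X} {xs x y : X} {r : ℝ}

theorem neg_le_sac_of_mem (h : (x, xs, r) ∈ P.Traj) : ((-r : ℝ) : EReal) ≤ Sac P xs x :=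
  le_sSup ⟨r, h, rfl⟩

theorem src_le_of_mem (h : (xs, x, r) ∈ P.Traj) : Src P xs x ≤ (r : EReal) :=
  sInf_le ⟨r, h, rfl⟩

theorem sac_le_of_cycloDissAt (hcd : CycloDissAt P xs) (hcat : HasConcat P)
    (h : (xs, x, r) ∈ P.Traj) : Sac P xs x ≤ (r : EReal) := by
  refine sSup_le ?_
  rintro _ ⟨s, hs, rfl⟩
  have := hcd (r + s) (hcat xs x xs r s h hs)
  exact_mod_cast (by linarith : -s ≤ r)

theorem neg_le_src_of_cycloDissAt (hcd : CycloDissAt P xs) (hcat : HasConcat P)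
    (h : (x, xs, r) ∈ P.Traj) : ((-r : ℝ) : EReal) ≤ Src P xs x := by
  refine le_sInf ?_
  rintro _ ⟨s, hs, rfl⟩
  have := hcd (s + r) (hcat xs x xs s r hs h)
  exact_mod_cast (by linarith : -r ≤ s)

theorem sac_le_sac_add (hcat : HasConcat P) (h : (x, y, r) ∈ P.Traj) :
    Sac P xs y ≤ Sac P xs x + r := by
  refine sSup_le ?_
  rintro _ ⟨s, hs, rfl⟩
  calc ((-s : ℝ) : EReal) = ((-(r + s) : ℝ) : EReal) + r := by
        rw [← EReal.coe_add]; ring_nf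
    _ ≤ Sac P xs x + r := by gcongr; exact neg_le_sac_of_mem (hcat x y xs r s h hs)

theorem src_le_src_add (hcat : HasConcat P) (h : (x, y, r) ∈ P.Traj) :
    Src P xs y ≤ Src P xs x + r := by
  rw [← EReal.sub_le_iff_le_add (.inl (EReal.coe_ne_bot r)) (.inl (EReal.coe_ne_top r))]
  refine le_sInf ?_
  rintro _ ⟨s, hs, rfl⟩
  rw [EReal.sub_le_iff_le_add (.inl (EReal.coe_ne_bot r)) (.inl (EReal.coe_ne_top r))]
  exact_mod_cast src_le_of_mem (hcat xs x y s r hs h)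

end Storage

theorem isStorage_toReal_of_le_add {X : Type} {P : Sys X} {S : X → EReal}
    (hbot : ∀ x, S x ≠ ⊥) (htop : ∀ x, S x ≠ ⊤)
    (hS : ∀ x y r, (x, y, r) ∈ P.Traj → S y ≤ S x + r) :
    IsStorage P (fun x => (S x).toReal) := by
  rintro ⟨x, y, r⟩ hτ
  have := EReal.toReal_le_toReal (hS x y r hτ) (hbot y)
    (EReal.add_lt_top (htop x) (EReal.coe_ne_top r)).ne
  rwa [EReal.toReal_add (htop x) (hbot x) (EReal.coe_ne_top r) (EReal.coe_ne_bot r),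
    EReal.toReal_coe] at this

theorem IsStorage.cycloDiss {X : Type} {P : Sys X} {S : X → ℝ} (hS : IsStorage P S) :
    CycloDiss P := by
  rintro ⟨x, y, r⟩ hτ (rfl : y = x)
  have := hS _ hτ
  dsimp only at this
  linarith

/-- S_ac and S_rc are real-valued storage functions; hence cyclo-dissipativity. -/
theorem stmt8 {X : Type} (P : Sys X) (xs : X) (hcd : CycloDissAt P xs)
    (hR : ReachableFrom P xs) (hC : ControllableTo P xs) (hcat : HasConcat P) :
    (∀ x : X, Sac P xs x ≠ ⊥ ∧ Sac P xs x ≠ ⊤ ∧ Src P xs x ≠ ⊥ ∧ Src P xs x ≠ ⊤) ∧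
    IsStorage P (fun x => (Sac P xs x).toReal) ∧
    IsStorage P (fun x => (Src P xs x).toReal) ∧
    CycloDiss P := by
  have hfin : ∀ x : X, Sac P xs x ≠ ⊥ ∧ Sac P xs x ≠ ⊤ ∧ Src P xs x ≠ ⊥ ∧ Src P xs x ≠ ⊤ := by
    intro x
    obtain ⟨a, ha⟩ := hC x
    obtain ⟨b, hb⟩ := hR x
    exact ⟨ne_bot_of_le_ne_bot (EReal.coe_ne_bot _) (neg_le_sac_of_mem ha),
      ne_top_of_le_ne_top (EReal.coe_ne_top _) (sac_le_of_cycloDissAt hcd hcat hb),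
      ne_bot_of_le_ne_bot (EReal.coe_ne_bot _) (neg_le_src_of_cycloDissAt hcd hcat ha),
      ne_top_of_le_ne_top (EReal.coe_ne_top _) (src_le_of_mem hb)⟩
  have hSac : IsStorage P (fun x => (Sac P xs x).toReal) :=
    isStorage_toReal_of_le_add (fun x => (hfin x).1) (fun x => (hfin x).2.1)
      fun _ _ _ => sac_le_sac_add hcat
  have hSrc : IsStorage P (fun x => (Src P xs x).toReal) :=
    isStorage_toReal_of_le_add (fun x => (hfin x).2.2.1) (fun x => (hfin x).2.2.2)
      fun _ _ _ => src_le_src_add hcat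
  exact ⟨hfin, hSac, hSrc, hSac.cycloDiss⟩
end

section
/- Let S^*_{ac} and S^{**}_{ac} denote the constrained available storages with respect to ground states x* and x** respectively, for a system cyclo-dissipative with respect to both ground states (with reachability/controllability). Then S^*_{ac}(x**) + S^{**}_{ac}(x*) ≤ 0. Dually, S^*_{rc}(x**) + S^{**}_{rc}(x*) ≥ 0. -/
open Set Filter

/-! A trajectory `x → y` followed by one `y → x` is a cycle at `x`, so cyclo-dissipativity
at `x` makes the two supplies sum to something nonnegative; each inequality then bounds one
extremum by the negative of the other. In `EReal` the supremum inequality survives empty sets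
because `⊥` absorbs, while the infimum inequality needs trajectories in both directions to rule
out `⊤ + ⊥`. -/

section Storage

variable {X : Type} {P : Sys X} {x y : X}

def RoundTripsNonneg (P : Sys X) (x y : X) : Prop :=
  ∀ r₁ r₂, (x, y, r₁) ∈ P.Traj → (y, x, r₂) ∈ P.Traj → 0 ≤ r₁ + r₂

theorem RoundTripsNonneg.symm (h : RoundTripsNonneg P x y) : RoundTripsNonneg P y x :=
  fun r₁ r₂ h₁ h₂ => add_comm r₂ r₁ ▸ h r₂ r₁ h₂ h₁

theorem CycloDissAt.roundTripsNonneg (hcd : CycloDissAt P x) (hcat : HasConcat P) :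
    RoundTripsNonneg P x y :=
  fun _ _ h₁ h₂ => hcd _ (hcat _ _ _ _ _ h₁ h₂)

theorem sac_le {e : EReal} (h : ∀ r, (x, y, r) ∈ P.Traj → ((-r : ℝ) : EReal) ≤ e) :
    Sac P y x ≤ e :=
  sSup_le fun _ ⟨r, hr, he⟩ => he ▸ h r hr

theorem le_src {e : EReal} (h : ∀ r, (x, y, r) ∈ P.Traj → e ≤ r) : e ≤ Src P x y :=
  le_sInf fun _ ⟨r, hr, he⟩ => he ▸ h r hr

theorem RoundTripsNonneg.sac_add_sac_nonpos (hxy : RoundTripsNonneg P x y) :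
    Sac P x y + Sac P y x ≤ 0 := by
  refine EReal.add_le_of_le_sub ?_
  rw [zero_sub]
  refine sac_le fun r₂ h₂ => EReal.le_neg_of_le_neg (sac_le fun r₁ h₁ => ?_)
  rw [← EReal.coe_neg, neg_neg]
  exact_mod_cast (by linarith [hxy r₁ r₂ h₁ h₂])

theorem RoundTripsNonneg.neg_le_src {r : ℝ} (hxy : RoundTripsNonneg P x y)
    (h : (x, y, r) ∈ P.Traj) : ((-r : ℝ) : EReal) ≤ Src P y x :=
  le_src fun r' h' => by exact_mod_cast (by linarith [hxy r r' h h'])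

theorem RoundTripsNonneg.src_add_src_nonneg (hxy : RoundTripsNonneg P x y)
    {r₁ r₂ : ℝ} (h₁ : (x, y, r₁) ∈ P.Traj) (h₂ : (y, x, r₂) ∈ P.Traj) :
    0 ≤ Src P x y + Src P y x := by
  have hyx_ne_bot : Src P y x ≠ ⊥ :=
    ne_bot_of_le_ne_bot (EReal.coe_ne_bot _) (hxy.neg_le_src h₁)
  have hxy_ne_bot : Src P x y ≠ ⊥ :=
    ne_bot_of_le_ne_bot (EReal.coe_ne_bot _) (hxy.symm.neg_le_src h₂)
  rw [← EReal.sub_le_iff_le_add (.inl hyx_ne_bot) (.inr hxy_ne_bot), zero_sub]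
  refine le_src fun r h => EReal.neg_le_of_neg_le ?_
  exact_mod_cast hxy.neg_le_src h

end Storage

theorem stmt9_general {X : Type} (P : Sys X) (x1 x2 : X)
    (hcd1 : CycloDissAt P x1)
    (hR1 : ReachableFrom P x1)
    (hR2 : ReachableFrom P x2)
    (hcat : HasConcat P) :
    Sac P x1 x2 + Sac P x2 x1 ≤ 0 ∧ 0 ≤ Src P x1 x2 + Src P x2 x1 := by
  have hround : RoundTripsNonneg P x1 x2 := hcd1.roundTripsNonneg hcat
  obtain ⟨r₁, h₁⟩ := hR1 x2
  obtain ⟨r₂, h₂⟩ := hR2 x1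
  exact ⟨hround.sac_add_sac_nonpos, hround.src_add_src_nonneg h₁ h₂⟩

/-- for two ground states, S*_ac(x**) + S**_ac(x*) ≤ 0 and S*_rc(x**) + S**_rc(x*) ≥ 0. -/
theorem stmt9 {X : Type} (P : Sys X) (x1 x2 : X)
    (hcd1 : CycloDissAt P x1) (hcd2 : CycloDissAt P x2)
    (hR1 : ReachableFrom P x1) (hC1 : ControllableTo P x1)
    (hR2 : ReachableFrom P x2) (hC2 : ControllableTo P x2)
    (hcat : HasConcat P) (htriv : HasTrivial P) :
    Sac P x1 x2 + Sac P x2 x1 ≤ 0 ∧ 0 ≤ Src P x1 x2 + Src P x2 x1 :=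
  stmt9_general P x1 x2 hcd1 hR1 hR2 hcat
end

section
/- If the system is reachable from x* and S_a(x*) = 0, then the system is dissipative (admits a nonnegative storage function) if and only if ∫_0^T s(u(t),y(t)) dt ≥ 0 for all trajectories starting at x(0) = x*. -/
open Set Filter

/-- external characterization of dissipativity when S_a(x*) = 0. -/
theorem stmt11 {X : Type} (P : Sys X) (xs : X) (hR : ReachableFrom P xs)
    (hcat : HasConcat P) (htriv : HasTrivial P) (hSa : Sa P xs = 0) :
    (∃ S : X → ℝ, (∀ x, 0 ≤ S x) ∧ IsStorage P S) ↔
    (∀ y : X, ∀ r : ℝ, (xs, y, r) ∈ P.Traj → 0 ≤ r) := by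
  constructor
  · intro _ y r hmem
    have hle : ((-r : ℝ) : EReal) ≤ Sa P xs :=
      le_sSup ⟨y, r, hmem, rfl⟩
    rw [hSa] at hle
    have : (-r : ℝ) ≤ (0 : ℝ) := by exact_mod_cast hle
    linarith
  · intro hext
    set T : X → Set ℝ := fun x => {s : ℝ | ∃ y r, (x, y, r) ∈ P.Traj ∧ s = -r} with hT
    have hne : ∀ x, (0 : ℝ) ∈ T x := fun x => ⟨x, 0, htriv x, by ring⟩
    have hbdd : ∀ x, BddAbove (T x) := by
      intro x
      obtain ⟨r₀, hr₀⟩ := hR x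
      refine ⟨r₀, ?_⟩
      rintro s ⟨y, r, hmem, rfl⟩
      have := hext y (r₀ + r) (hcat xs x y r₀ r hr₀ hmem)
      linarith
    refine ⟨fun x => sSup (T x), fun x => le_csSup (hbdd x) (hne x), ?_⟩
    rintro ⟨a, b, r⟩ hmem
    show sSup (T b) ≤ sSup (T a) + r
    refine csSup_le ⟨0, hne b⟩ ?_
    rintro s ⟨z, q, hq, rfl⟩
    have h1 : (-(r + q) : ℝ) ∈ T a := ⟨z, r + q, hcat a b z r q hmem hq, rfl⟩
    have h2 := le_csSup (hbdd a) h1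
    linarith
end

section
/- If S_a(x) < ∞ for all x ∈ X, then S_a is a nonnegative storage function satisfying the dissipation inequality, and inf_x S_a(x) = 0 provided some state x₀ has S_a(x₀) = 0 or the trivial trajectories give S_a ≥ 0 with the infimum attained arbitrarily closely; moreover every nonnegative storage function S satisfies S_a(x) ≤ S(x) − inf_x S(x). -/
open Set Filter

/-!
Concatenating a trajectory `x → y` with any trajectory leaving `y` shows
`S_a(y) ≤ S_a(x) + ∫ s`, so a finite `S_a` is a storage function. Choosing the first trajectory
`ε`-optimal for `S_a(x)` forces `S_a(y) < ε`, whence `inf S_a = 0`. Finally, along a trajectory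
`x → y` a storage function gives `-∫ s ≤ S(x) - S(y) ≤ S(x) - inf S`.
-/

namespace Sys

variable {X : Type} (P : Sys X)

theorem le_Sa_of_mem {x y : X} {r : ℝ} (h : (x, y, r) ∈ P.Traj) : ((-r : ℝ) : EReal) ≤ Sa P x :=
  le_sSup ⟨y, r, h, rfl⟩

theorem Sa_nonneg (htriv : HasTrivial P) (x : X) : 0 ≤ Sa P x := by
  simpa using P.le_Sa_of_mem (htriv x)

theorem Sa_le_add_of_mem (hcat : HasConcat P) {x y : X} {r : ℝ} (h : (x, y, r) ∈ P.Traj) :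
    Sa P y ≤ Sa P x + r := by
  refine sSup_le ?_
  rintro _ ⟨z, r', h', rfl⟩
  calc ((-r' : ℝ) : EReal) = ((-(r + r') : ℝ) : EReal) + r := by rw [← EReal.coe_add]; ring_nf
    _ ≤ Sa P x + r := by gcongr; exact P.le_Sa_of_mem (hcat x y z r r' h h')

theorem isStorage_toReal_Sa (hcat : HasConcat P) (htop : ∀ x, Sa P x ≠ ⊤)
    (hbot : ∀ x, Sa P x ≠ ⊥) : IsStorage P (fun x => (Sa P x).toReal) := by
  rintro ⟨x, y, r⟩ h
  have hdiss := P.Sa_le_add_of_mem hcat h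
  rw [← EReal.coe_toReal (htop x) (hbot x), ← EReal.coe_toReal (htop y) (hbot y),
    ← EReal.coe_add] at hdiss
  exact_mod_cast hdiss

theorem exists_Sa_lt (hcat : HasConcat P) {x : X} (hx : Sa P x ≠ ⊤) {ε : ℝ} (hε : 0 < ε) :
    ∃ y, Sa P y < ε := by
  obtain hbot | hbot := eq_or_ne (Sa P x) ⊥
  · exact ⟨x, hbot ▸ EReal.bot_lt_coe ε⟩
  obtain ⟨a, ha⟩ : ∃ a : ℝ, Sa P x = a := ⟨_, (EReal.coe_toReal hx hbot).symm⟩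
  have hnear : ((a - ε : ℝ) : EReal) < Sa P x := by rw [ha]; exact_mod_cast sub_lt_self a hε
  obtain ⟨_, ⟨y, r, h, rfl⟩, hlt⟩ := lt_sSup_iff.mp hnear
  have hr : a + r < ε := by linarith [EReal.coe_lt_coe_iff.mp hlt]
  refine ⟨y, (P.Sa_le_add_of_mem hcat h).trans_lt ?_⟩
  rw [ha, ← EReal.coe_add]
  exact_mod_cast hr

theorem iInf_Sa_eq_zero (hcat : HasConcat P) (htriv : HasTrivial P) {x : X} (hx : Sa P x ≠ ⊤) :
    ⨅ y, Sa P y = 0 := by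
  refine le_antisymm (le_of_forall_gt_imp_ge_of_dense fun c hc => ?_) (le_iInf (P.Sa_nonneg htriv))
  obtain ⟨ε, hε, hεc⟩ := EReal.lt_iff_exists_real_btwn.mp hc
  obtain ⟨y, hy⟩ := P.exists_Sa_lt hcat hx (EReal.coe_pos.mp hε)
  exact (iInf_le _ y).trans (hy.trans hεc).le

theorem Sa_le_sub_of_isStorage {S : X → ℝ} (hS : IsStorage P S) {m : ℝ} (hm : ∀ y, m ≤ S y)
    (x : X) : Sa P x ≤ ((S x - m : ℝ) : EReal) := by
  refine sSup_le ?_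
  rintro _ ⟨y, r, h, rfl⟩
  have hdiss : S y ≤ S x + r := hS _ h
  exact_mod_cast (by linarith [hm y] : -r ≤ S x - m)

end Sys

/-- if S_a is finite then it is a nonnegative storage function with inf 0,
and every nonnegative storage function S satisfies S_a(x) ≤ S(x) − inf S. -/
theorem stmt12 {X : Type} [Nonempty X] (P : Sys X) (hcat : HasConcat P)
    (htriv : HasTrivial P) (hfin : ∀ x : X, Sa P x < ⊤) :
    IsStorage P (fun x => (Sa P x).toReal) ∧ (∀ x : X, 0 ≤ (Sa P x).toReal) ∧
    (⨅ x : X, Sa P x) = 0 ∧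
    ∀ S : X → ℝ, (∀ x, 0 ≤ S x) → IsStorage P S →
      ∀ x : X, Sa P x ≤ ((S x - sInf (Set.range S) : ℝ) : EReal) := by
  have htop : ∀ x, Sa P x ≠ ⊤ := fun x => (hfin x).ne
  have hbot : ∀ x, Sa P x ≠ ⊥ := fun x => ne_bot_of_le_ne_bot EReal.zero_ne_bot (P.Sa_nonneg htriv x)
  refine ⟨P.isStorage_toReal_Sa hcat htop hbot, fun x => EReal.toReal_nonneg (P.Sa_nonneg htriv x),
    P.iInf_Sa_eq_zero hcat htriv (htop (Classical.arbitrary X)), fun S hS hstor => ?_⟩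
  exact P.Sa_le_sub_of_isStorage hstor fun y =>
    csInf_le ⟨0, by rintro _ ⟨z, rfl⟩; exact hS z⟩ ⟨y, rfl⟩
end

section
/- If S_r(x) > −∞ for all x ∈ X, then S_r is a nonpositive storage function with sup_x S_r(x) = 0, and every nonpositive storage function S satisfies S_r(x) ≥ S(x) − sup_x S(x). -/
open Set Filter

lemma Sr_le' {X : Type} (P : Sys X) {x y : X} {r : ℝ} (h : (y, x, r) ∈ P.Traj) :
    Sr P x ≤ (r : EReal) := sInf_le ⟨y, r, h, rfl⟩

lemma Sr_nonpos {X : Type} (P : Sys X) (htriv : HasTrivial P) (x : X) : Sr P x ≤ 0 := by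
  simpa using Sr_le' P (htriv x)

lemma Sr_ne_top {X : Type} (P : Sys X) (htriv : HasTrivial P) (x : X) : Sr P x ≠ ⊤ :=
  ((Sr_nonpos P htriv x).trans_lt (by simp)).ne

lemma Sr_coe {X : Type} (P : Sys X) (htriv : HasTrivial P) (hfin : ∀ x : X, ⊥ < Sr P x)
    (x : X) : Sr P x = (((Sr P x).toReal : ℝ) : EReal) :=
  (EReal.coe_toReal (Sr_ne_top P htriv x) (hfin x).ne').symm

lemma Sr_exists {X : Type} (P : Sys X) {x : X} {b : EReal} (h : Sr P x < b) :
    ∃ y r, (y, x, r) ∈ P.Traj ∧ (r : EReal) < b := by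
  obtain ⟨e, he, hlt⟩ := sInf_lt_iff.mp h
  obtain ⟨y, r, hm, rfl⟩ := he
  exact ⟨y, r, hm, hlt⟩

lemma Sr_diss {X : Type} (P : Sys X) (hcat : HasConcat P) (htriv : HasTrivial P)
    (hfin : ∀ x : X, ⊥ < Sr P x) {x₁ x₂ : X} {r : ℝ} (h : (x₁, x₂, r) ∈ P.Traj) :
    (Sr P x₂).toReal ≤ (Sr P x₁).toReal + r := by
  set a := (Sr P x₁).toReal with ha
  apply le_of_forall_pos_le_add
  intro ε hε
  have h1 : Sr P x₁ < ((a + ε : ℝ) : EReal) := by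
    rw [Sr_coe P htriv hfin x₁]
    exact_mod_cast lt_add_of_pos_right a hε
  obtain ⟨y, r₁, hm, hr₁⟩ := Sr_exists P h1
  have hr₁' : r₁ < a + ε := by exact_mod_cast hr₁
  have h2 : Sr P x₂ ≤ ((r₁ + r : ℝ) : EReal) := Sr_le' P (hcat _ _ _ _ _ hm h)
  rw [Sr_coe P htriv hfin x₂] at h2
  have h2' : (Sr P x₂).toReal ≤ r₁ + r := by exact_mod_cast h2
  linarith

theorem stmt13' {X : Type} [Nonempty X] (P : Sys X) (hcat : HasConcat P)
    (htriv : HasTrivial P) (hfin : ∀ x : X, ⊥ < Sr P x) :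
    IsStorage P (fun x => (Sr P x).toReal) ∧ (∀ x : X, Sr P x ≤ 0) ∧
    (⨆ x : X, Sr P x) = 0 ∧
    ∀ S : X → ℝ, (∀ x, S x ≤ 0) → IsStorage P S →
      ∀ x : X, ((S x - sSup (Set.range S) : ℝ) : EReal) ≤ Sr P x := by
  refine ⟨?_, Sr_nonpos P htriv, ?_, ?_⟩
  · rintro ⟨x₁, x₂, r⟩ h
    exact Sr_diss P hcat htriv hfin h
  · have hle : (⨆ x : X, Sr P x) ≤ 0 := iSup_le (Sr_nonpos P htriv)
    by_contra hne
    have hlt : (⨆ x : X, Sr P x) < 0 := lt_of_le_of_ne hle hne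
    obtain ⟨x₀⟩ := ‹Nonempty X›
    have hbot : ⊥ < (⨆ x : X, Sr P x) := lt_of_lt_of_le (hfin x₀) (le_iSup _ x₀)
    set c := (⨆ x : X, Sr P x).toReal with hc
    have hcoe : (⨆ x : X, Sr P x) = ((c : ℝ) : EReal) :=
      (EReal.coe_toReal (hlt.trans (by simp)).ne hbot.ne').symm
    have hcneg : c < 0 := by
      have := hlt
      rw [hcoe] at this
      exact_mod_cast this
    have hub : ∀ x, (Sr P x).toReal ≤ c := by
      intro x
      have := le_iSup (fun x => Sr P x) x
      rw [hcoe, Sr_coe P htriv hfin x] at this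
      exact_mod_cast this
    have bound : ∀ n : ℕ, ∀ x : X, (Sr P x).toReal ≤ n * (c / 2) := by
      intro n
      induction n with
      | zero => intro x; simpa using (hub x).trans hcneg.le
      | succ n ih =>
        intro x
        have hx : Sr P x < ((c / 2 : ℝ) : EReal) := by
          rw [Sr_coe P htriv hfin x]
          exact_mod_cast lt_of_le_of_lt (hub x) (by linarith)
        obtain ⟨y, r, hm, hr⟩ := Sr_exists P hx
        have hr' : r < c / 2 := by exact_mod_cast hr
        have := Sr_diss P hcat htriv hfin hm
        have hy := ih y
        push_cast
        linarith
    obtain ⟨n, hn⟩ := exists_nat_gt ((Sr P x₀).toReal / (c / 2))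
    have : (n : ℝ) * (c / 2) < (Sr P x₀).toReal := by
      have h2 : c / 2 < 0 := by linarith
      calc (n : ℝ) * (c / 2) < ((Sr P x₀).toReal / (c / 2)) * (c / 2) :=
            (mul_lt_mul_right_of_neg h2).mpr hn
        _ = (Sr P x₀).toReal := div_mul_cancel₀ _ h2.ne
    exact absurd (bound n x₀) (not_le.mpr this)
  · intro S hS hstor x
    apply le_sInf
    rintro e ⟨y, r, hm, rfl⟩
    have h1 : S x ≤ S y + r := hstor (y, x, r) hm
    have h2 : S y ≤ sSup (Set.range S) :=
      le_csSup ⟨0, by rintro _ ⟨z, rfl⟩; exact hS z⟩ ⟨y, rfl⟩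
    exact_mod_cast by linarith

/-- if S_r > −∞ everywhere then it is a nonpositive storage function with sup 0,
and every nonpositive storage function S satisfies S_r(x) ≥ S(x) − sup S. -/
theorem stmt13 {X : Type} [Nonempty X] (P : Sys X) (hcat : HasConcat P)
    (htriv : HasTrivial P) (hfin : ∀ x : X, ⊥ < Sr P x) :
    IsStorage P (fun x => (Sr P x).toReal) ∧ (∀ x : X, Sr P x ≤ 0) ∧
    (⨆ x : X, Sr P x) = 0 ∧
    ∀ S : X → ℝ, (∀ x, S x ≤ 0) → IsStorage P S →
      ∀ x : X, ((S x - sSup (Set.range S) : ℝ) : EReal) ≤ Sr P x :=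
  stmt13' P hcat htriv hfin
end

section
/- If the system is controllable to x*, then S_r(x) > −∞ for all x if and only if S_r(x*) > −∞; equivalently (via S_r(x*) = inf_x (−S_{ac}(x))) if and only if sup_x S_{ac}(x) < ∞. -/
open Set Filter

/-- under controllability to x*, S_r > −∞ everywhere iff S_r(x*) > −∞,
iff sup_x S_ac(x) < ∞. -/
theorem stmt14 {X : Type} (P : Sys X) (xs : X) (hC : ControllableTo P xs)
    (hcat : HasConcat P) :
    ((∀ x : X, ⊥ < Sr P x) ↔ ⊥ < Sr P xs) ∧
    (⊥ < Sr P xs ↔ (⨆ x : X, Sac P xs x) < ⊤) := by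
  have hub : (⨆ x : X, Sac P xs x) ≤ -(Sr P xs) := by
    refine iSup_le fun x => sSup_le ?_
    rintro e ⟨r, hr, rfl⟩
    have h1 : Sr P xs ≤ ((r : ℝ) : EReal) := sInf_le ⟨x, r, hr, rfl⟩
    rw [EReal.coe_neg]
    exact EReal.neg_le_neg_iff.2 h1
  have hlb : -(⨆ x : X, Sac P xs x) ≤ Sr P xs := by
    refine le_sInf ?_
    rintro e ⟨y, r, hr, rfl⟩
    rw [EReal.neg_le]
    calc -((r : ℝ) : EReal) = ((-r : ℝ) : EReal) := by rw [EReal.coe_neg]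
      _ ≤ Sac P xs y := le_sSup ⟨r, hr, rfl⟩
      _ ≤ ⨆ x : X, Sac P xs x := le_iSup _ y
  constructor
  · constructor
    · exact fun h => h xs
    · intro hxs x
      obtain ⟨r₀, h₀⟩ := hC x
      have hle : Sr P xs - (r₀ : ℝ) ≤ Sr P x := by
        refine le_sInf ?_
        rintro e ⟨y, r, hr, rfl⟩
        have h1 : Sr P xs ≤ ((r + r₀ : ℝ) : EReal) :=
          sInf_le ⟨y, r + r₀, hcat _ _ _ _ _ hr h₀, rfl⟩
        have h2 : Sr P xs - (r₀ : ℝ) ≤ ((r + r₀ : ℝ) : EReal) - (r₀ : ℝ) :=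
          EReal.sub_le_sub h1 le_rfl
        calc Sr P xs - (r₀ : ℝ) ≤ ((r + r₀ : ℝ) : EReal) - (r₀ : ℝ) := h2
          _ = ((r : ℝ) : EReal) + (r₀ : ℝ) - (r₀ : ℝ) := by push_cast; ring_nf
          _ = ((r : ℝ) : EReal) := EReal.add_sub_cancel_right
      refine lt_of_lt_of_le ?_ hle
      rw [EReal.lt_sub_iff_add_lt (Or.inl (EReal.coe_ne_bot _)) (Or.inl (EReal.coe_ne_top _)),
        EReal.bot_add]
      exact hxs
  · constructor
    · intro h
      refine lt_of_le_of_lt hub ?_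
      rw [EReal.neg_lt_comm, EReal.neg_top]
      exact h
    · intro h
      refine lt_of_lt_of_le ?_ hlb
      rw [← EReal.neg_top]
      exact EReal.neg_lt_neg_iff.2 h
end

section
/- For the scalar system ẋ = u, y = eˣ with supply rate s = uy, the available storage equals S_a(x) = eˣ and the required supply equals S_r(x) = −∞ for every x. -/
open Set Filter

/-- The scalar system ẋ = u, y = eˣ with supply rate s = uy: since ∫ ẋ eˣ dt = eˣ(end) − eˣ(start)
and any pair of states can be joined, the trajectories are exactly the triples with that supply. -/
def expSys : Sys ℝ := ⟨{τ | τ.2.2 = Real.exp τ.2.1 - Real.exp τ.1}⟩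

/-- S_a(x) = eˣ and S_r(x) = −∞. -/
theorem stmt17 : ∀ x : ℝ, Sa expSys x = ((Real.exp x : ℝ) : EReal) ∧ Sr expSys x = ⊥ := by
  intro x
  constructor
  · apply le_antisymm
    · apply sSup_le
      rintro e ⟨y, r, hr, rfl⟩
      simp only [expSys, Set.mem_setOf_eq] at hr
      rw [hr]
      have : -(Real.exp y - Real.exp x) ≤ Real.exp x := by
        have := Real.exp_pos y; linarith
      exact_mod_cast this
    · rw [Sa, le_sSup_iff]
      intro b hb
      by_contra h
      push_neg at h
      obtain ⟨z, hz1, hz2⟩ := EReal.exists_between_coe_real h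
      have hpos : (0:ℝ) < Real.exp x - z := by
        have : (z : EReal) < (Real.exp x : EReal) := hz2
        have := EReal.coe_lt_coe_iff.mp this
        linarith
      have hmem : ((z : ℝ) : EReal) ∈
          {e : EReal | ∃ y r, (x, y, r) ∈ expSys.Traj ∧ e = ((-r : ℝ) : EReal)} := by
        refine ⟨Real.log (Real.exp x - z), Real.exp (Real.log (Real.exp x - z)) - Real.exp x, ?_, ?_⟩
        · simp [expSys]
        · rw [Real.exp_log hpos]
          norm_num
      exact absurd (hb hmem) (not_le.mpr hz1)
  · rw [eq_bot_iff, Sr, sInf_le_iff]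
    intro b hb
    by_contra h
    push_neg at h
    obtain ⟨z, hz1, hz2⟩ := EReal.exists_between_coe_real h
    set c : ℝ := max 1 (Real.exp x - z + 1) with hc
    have hcpos : (0:ℝ) < c := lt_of_lt_of_le one_pos (le_max_left _ _)
    have hmem : ((Real.exp x - c : ℝ) : EReal) ∈
        {e : EReal | ∃ y r, (y, x, r) ∈ expSys.Traj ∧ e = ((r : ℝ) : EReal)} := by
      refine ⟨Real.log c, Real.exp x - Real.exp (Real.log c), ?_, ?_⟩
      · simp [expSys]
      · rw [Real.exp_log hcpos]
    have hle : b ≤ ((Real.exp x - c : ℝ) : EReal) := hb hmem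
    have hzc : Real.exp x - c < z := by
      have : Real.exp x - z + 1 ≤ c := le_max_right _ _
      linarith
    have : b < (z : EReal) := lt_of_le_of_lt hle (by exact_mod_cast hzc)
    exact absurd hz2 (not_lt.mpr (le_of_lt this))
end
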